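/- The comma construction is associative: for a chain of functors A → B ← C → D ← E, there are canonical isomorphisms of categories (A ↓_B C) ↓_D E ≅ (A ↓_B C) ×_C (C ↓_D E) ≅ A ↓_B (C ↓_D E), where the outer comma categories are formed using the composite functors through the projections. -/

import Mathlib

open CategoryTheory
universe u

/-- The (strict) fibre product of two functors with common target. -/
structure CatPullback {X Y Z : Type u} [SmallCategory X] [SmallCategory Y] [SmallCategory Z]
    (p : X ⥤ Z) (q : Y ⥤ Z) : Type u where
  left : X
  right : Y
  eq : p.obj left = q.obj right

instance {X Y Z : Type u} [SmallCategory X] [SmallCategory Y] [SmallCategory Z]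
    (p : X ⥤ Z) (q : Y ⥤ Z) : Category.{u} (CatPullback p q) where
  Hom x y := {φ : (x.left ⟶ y.left) × (x.right ⟶ y.right) //
    p.map φ.1 = eqToHom x.eq ≫ q.map φ.2 ≫ eqToHom y.eq.symm}
  id x := ⟨(𝟙 _, 𝟙 _), by simp⟩
  comp φ ψ := ⟨(φ.1.1 ≫ ψ.1.1, φ.1.2 ≫ ψ.1.2), by simp [φ.2, ψ.2]⟩
  id_comp φ := by apply Subtype.ext; simp
  comp_id φ := by apply Subtype.ext; simp
  assoc φ ψ χ := by apply Subtype.ext; simp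

/-- A functor is an isomorphism of categories if it admits a strict inverse. -/
def IsCatIso {X Y : Type u} [SmallCategory X] [SmallCategory Y] (e : X ⥤ Y) : Prop :=
  ∃ e' : Y ⥤ X, e ⋙ e' = 𝟭 X ∧ e' ⋙ e = 𝟭 Y

/-! Both isomorphisms are instances of one fact: pulling the comma category `h ↓ k` back along
its projection to `C` by a functor `P : X ⥤ C` gives `(P ⋙ h) ↓ k`, since an object of either
side is an `x : X` together with an arrow `h (P x) ⟶ k e`; dually for `f ↓ (Q ⋙ g)`. The
strict equation in the fibre product is handled by writing every object in a form where it
holds by `rfl`. -/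

@[ext]
lemma CatPullback.hom_ext {X Y Z : Type u} [SmallCategory X] [SmallCategory Y] [SmallCategory Z]
    {p : X ⥤ Z} {q : Y ⥤ Z} {x y : CatPullback p q} {φ ψ : x ⟶ y} (h : φ.1 = ψ.1) : φ = ψ :=
  Subtype.ext h

section CompLeft

variable {X C D E : Type u} [SmallCategory X] [SmallCategory C] [SmallCategory D]
  [SmallCategory E] (P : X ⥤ C) (h : C ⥤ D) (k : E ⥤ D)

lemma CatPullback.exists_eq_mk_of_fst (x : CatPullback P (Comma.fst h k)) :
    ∃ (a : X) (e : E) (m : h.obj (P.obj a) ⟶ k.obj e), x = ⟨a, ⟨P.obj a, e, m⟩, rfl⟩ := by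
  obtain ⟨a, ⟨c, e, m⟩, hc : P.obj a = c⟩ := x
  subst hc
  exact ⟨a, e, m, rfl⟩

def commaCompLeftToCatPullback : Comma (P ⋙ h) k ⥤ CatPullback P (Comma.fst h k) where
  obj x := ⟨x.left, ⟨P.obj x.left, x.right, x.hom⟩, rfl⟩
  map φ := ⟨(φ.left, ⟨P.map φ.left, φ.right, φ.w⟩), by simp⟩

-- Transport by `cast` rather than `eqToHom`, so that this is a strict left inverse by `rfl`.
def catPullbackToCommaCompLeft : CatPullback P (Comma.fst h k) ⥤ Comma (P ⋙ h) k where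
  obj x := ⟨x.left, x.right.right, cast (congrArg (h.obj · ⟶ _) x.eq.symm) x.right.hom⟩
  map {x y} φ := ⟨φ.1.1, φ.1.2.right, by
    obtain ⟨_, _, _, rfl⟩ := CatPullback.exists_eq_mk_of_fst P h k x
    obtain ⟨_, _, _, rfl⟩ := CatPullback.exists_eq_mk_of_fst P h k y
    obtain ⟨φ, hφ⟩ := φ
    simp only [Comma.fst_map, eqToHom_refl, Category.id_comp, Category.comp_id] at hφ
    simpa [hφ] using φ.2.w⟩

lemma isCatIso_commaCompLeftToCatPullback : IsCatIso (commaCompLeftToCatPullback P h k) := by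
  refine ⟨catPullbackToCommaCompLeft P h k, rfl, ?_⟩
  fapply Functor.hext
  · intro x
    obtain ⟨_, _, _, rfl⟩ := CatPullback.exists_eq_mk_of_fst P h k x
    rfl
  · intro x y φ
    obtain ⟨_, _, _, rfl⟩ := CatPullback.exists_eq_mk_of_fst P h k x
    obtain ⟨_, _, _, rfl⟩ := CatPullback.exists_eq_mk_of_fst P h k y
    obtain ⟨φ, hφ⟩ := φ
    simp only [Comma.fst_map, eqToHom_refl, Category.id_comp, Category.comp_id] at hφ
    exact heq_of_eq (CatPullback.hom_ext (Prod.ext rfl (Comma.hom_ext _ _ hφ rfl)))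

end CompLeft

section CompRight

variable {A B C Y : Type u} [SmallCategory A] [SmallCategory B] [SmallCategory C]
  [SmallCategory Y] (f : A ⥤ B) (g : C ⥤ B) (Q : Y ⥤ C)

lemma CatPullback.exists_eq_mk_of_snd (x : CatPullback (Comma.snd f g) Q) :
    ∃ (a : A) (y : Y) (m : f.obj a ⟶ g.obj (Q.obj y)), x = ⟨⟨a, Q.obj y, m⟩, y, rfl⟩ := by
  obtain ⟨⟨a, c, m⟩, y, hc : c = Q.obj y⟩ := x
  subst hc
  exact ⟨a, y, m, rfl⟩

def commaCompRightToCatPullback : Comma f (Q ⋙ g) ⥤ CatPullback (Comma.snd f g) Q where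
  obj x := ⟨⟨x.left, Q.obj x.right, x.hom⟩, x.right, rfl⟩
  map φ := ⟨(⟨φ.left, Q.map φ.right, φ.w⟩, φ.right), by simp⟩

def catPullbackToCommaCompRight : CatPullback (Comma.snd f g) Q ⥤ Comma f (Q ⋙ g) where
  obj x := ⟨x.left.left, x.right, cast (congrArg (_ ⟶ g.obj ·) x.eq) x.left.hom⟩
  map {x y} φ := ⟨φ.1.1.left, φ.1.2, by
    obtain ⟨_, _, _, rfl⟩ := CatPullback.exists_eq_mk_of_snd f g Q x
    obtain ⟨_, _, _, rfl⟩ := CatPullback.exists_eq_mk_of_snd f g Q y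
    obtain ⟨φ, hφ⟩ := φ
    simp only [Comma.snd_map, eqToHom_refl, Category.id_comp, Category.comp_id] at hφ
    simpa [← hφ] using φ.1.w⟩

lemma isCatIso_commaCompRightToCatPullback : IsCatIso (commaCompRightToCatPullback f g Q) := by
  refine ⟨catPullbackToCommaCompRight f g Q, rfl, ?_⟩
  fapply Functor.hext
  · intro x
    obtain ⟨_, _, _, rfl⟩ := CatPullback.exists_eq_mk_of_snd f g Q x
    rfl
  · intro x y φ
    obtain ⟨_, _, _, rfl⟩ := CatPullback.exists_eq_mk_of_snd f g Q x
    obtain ⟨_, _, _, rfl⟩ := CatPullback.exists_eq_mk_of_snd f g Q y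
    obtain ⟨φ, hφ⟩ := φ
    simp only [Comma.snd_map, eqToHom_refl, Category.id_comp, Category.comp_id] at hφ
    exact heq_of_eq (CatPullback.hom_ext (Prod.ext (Comma.hom_ext _ _ rfl hφ.symm) rfl))

end CompRight

/-- **Associativity of the comma construction:** for a chain `A → B ← C → D ← E`,
one has canonical isomorphisms of categories
`(A ↓_B C) ↓_D E ≅ (A ↓_B C) ×_C (C ↓_D E) ≅ A ↓_B (C ↓_D E)`. -/
theorem comma_assoc
    {A B C D E : Type u} [SmallCategory A] [SmallCategory B] [SmallCategory C]
    [SmallCategory D] [SmallCategory E]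
    (f : A ⥤ B) (g : C ⥤ B) (h : C ⥤ D) (k : E ⥤ D) :
    (∃ e₁ : Comma (Comma.snd f g ⋙ h) k ⥤ CatPullback (Comma.snd f g) (Comma.fst h k),
        IsCatIso e₁) ∧
      (∃ e₂ : Comma f (Comma.fst h k ⋙ g) ⥤ CatPullback (Comma.snd f g) (Comma.fst h k),
        IsCatIso e₂) :=
  ⟨⟨_, isCatIso_commaCompLeftToCatPullback _ h k⟩,
    ⟨_, isCatIso_commaCompRightToCatPullback f g _⟩⟩
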